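/- arXiv:1711.09456 — 11 statements merged into one kernel-verified Lean document; each statement's English description precedes it below -/
import Mathlib

section
/- Let R be a commutative ring, A an n×n matrix over R decomposed in blocks A = [[A₀, C], [B, D]] where A₀ is an s×s block (1 ≤ s < n) whose determinant δ_s is a non-zero-divisor in R. Let F = adj(A₀) be the adjugate of A₀. Then the (n-s)×(n-s) matrix whose (i,j) entry is the determinant of the (s+1)×(s+1) submatrix of A obtained by bordering A₀ with row s+i and column s+j equals δ_s·D − B·F·C. -/
open Matrix

/-- For a block matrix `A = [[A₀, C], [B, D]]` over a commutative ring,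
with `A₀` of size `s × s` (`1 ≤ s`) whose determinant is a non-zero-divisor, the matrix of
bordered `(s+1) × (s+1)` minors (the upper-left block `A₀` bordered by row `s+i` and
column `s+j`) equals `det A₀ • D - B * adjugate A₀ * C`. -/
theorem adjoint_bordered_minors_eq {R : Type*} [CommRing R] {s m : ℕ}
    (hs : 1 ≤ s) (hm : 1 ≤ m)
    (A₀ : Matrix (Fin s) (Fin s) R) (C : Matrix (Fin s) (Fin m) R)
    (B : Matrix (Fin m) (Fin s) R) (D : Matrix (Fin m) (Fin m) R)
    (hδ : A₀.det ∈ nonZeroDivisors R) :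
    (Matrix.of fun i j : Fin m =>
        (Matrix.fromBlocks A₀ (Matrix.of fun p (_ : Fin 1) => C p j)
          (Matrix.of fun (_ : Fin 1) q => B i q)
          (Matrix.of fun (_ : Fin 1) (_ : Fin 1) => D i j)).det)
      = A₀.det • D - B * A₀.adjugate * C := by
  ext i j
  set δ := A₀.det with hδdef
  set c : Matrix (Fin s) (Fin 1) R := Matrix.of fun p (_ : Fin 1) => C p j with hc
  set b : Matrix (Fin 1) (Fin s) R := Matrix.of fun (_ : Fin 1) q => B i q with hb
  set d : Matrix (Fin 1) (Fin 1) R := Matrix.of fun (_ : Fin 1) (_ : Fin 1) => D i j with hd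
  set M := Matrix.fromBlocks A₀ c b d with hM
  set N := Matrix.fromBlocks A₀.adjugate (-(A₀.adjugate * c)) (0 : Matrix (Fin 1) (Fin s) R) (δ • (1 : Matrix (Fin 1) (Fin 1) R)) with hN
  have hMN : M * N = Matrix.fromBlocks (δ • 1) 0 (b * A₀.adjugate)
      (b * (-(A₀.adjugate * c)) + d * (δ • 1)) := by
    rw [hM, hN, Matrix.fromBlocks_multiply, Matrix.mul_adjugate, Matrix.mul_zero,
      Matrix.mul_zero, add_zero, add_zero, Matrix.mul_neg, ← Matrix.mul_assoc,
      Matrix.mul_adjugate, Matrix.smul_mul, Matrix.one_mul, Matrix.mul_smul,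
      Matrix.mul_one, neg_add_cancel]
  have hdetN : N.det = δ ^ s := by
    rw [hN, Matrix.det_fromBlocks_zero₂₁, Matrix.det_adjugate, Matrix.det_smul,
      Matrix.det_one, mul_one]
    simp only [Fintype.card_fin]
    rw [pow_one, ← pow_succ, Nat.sub_add_cancel hs]
  have hdetMN : (M * N).det = δ ^ s * (D i j * δ - (b * (A₀.adjugate * c)) 0 0) := by
    rw [hMN, Matrix.det_fromBlocks_zero₁₂, Matrix.det_smul, Matrix.det_one, mul_one,
      Fintype.card_fin, Matrix.det_fin_one]
    simp [hd, Matrix.mul_apply, sub_eq_neg_add, mul_comm]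
  have key : δ ^ s * M.det = δ ^ s * (D i j * δ - (b * (A₀.adjugate * c)) 0 0) := by
    rw [← hdetMN, Matrix.det_mul, hdetN, mul_comm]
  have hMdet := (mul_cancel_left_mem_nonZeroDivisors (pow_mem hδ s)).mp key
  have hbc : (b * (A₀.adjugate * c)) 0 0 = (B * A₀.adjugate * C) i j := by
    simp only [Matrix.mul_apply, hb, hc, Matrix.of_apply, Finset.sum_mul, mul_assoc]
    rw [Finset.sum_comm]
    simp [Finset.mul_sum]
  simp only [Matrix.of_apply, Matrix.sub_apply, Matrix.smul_apply, smul_eq_mul]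
  rw [hMdet, hbc, mul_comm]
end

section
/- (Determinant Sylvester identity) Let R be a commutative ring, A an n×n matrix over R, and 1 ≤ s < t ≤ n. Let A^{(s)}_t be the (t-s+1)×(t-s+1) matrix whose (i,j) entry (for s ≤ i,j ≤ t) is the determinant of the s×s submatrix obtained by bordering the upper-left (s-1)×(s-1) block of A with row i and column j. Then det(A^{(s)}_t) = δ_{s-1}^{t-s} · δ_t, where δ_k denotes the determinant of the upper-left k×k block of A. -/
open Matrix

/-- `borderedMinor A k i j` is the determinant of the `k × k` submatrix of `A`
obtained by bordering the upper-left `(k-1) × (k-1)` block of `A` with row `i`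
and column `j` (when `k ≤ n`, the indices `p % n` coincide with `p`). -/
def borderedMinor {R : Type*} [CommRing R] {n : ℕ} (A : Matrix (Fin n) (Fin n) R)
    (k : ℕ) (i j : Fin n) : R :=
  (Matrix.of fun p q : Fin k =>
    A (if (p : ℕ) < k - 1 then ⟨p % n, Nat.mod_lt _ i.pos⟩ else i)
      (if (q : ℕ) < k - 1 then ⟨q % n, Nat.mod_lt _ j.pos⟩ else j)).det

/-- `cornerMinor A k hk = δ_k`, the determinant of the upper-left `k × k` block of `A`. -/
def cornerMinor {R : Type*} [CommRing R] {n : ℕ} (A : Matrix (Fin n) (Fin n) R)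
    (k : ℕ) (hk : k ≤ n) : R :=
  (A.submatrix (Fin.castLE hk) (Fin.castLE hk)).det

/-! Let `B` be the leading `(s-1) × (s-1)` block of the leading `t × t` block
`[[B, C], [D, E]]` of `A`. When `B` is invertible, each bordered minor `a^s_{i,j}` equals
`det B` times the `(i, j)` entry of the Schur complement `S = E - D B⁻¹ C`, so the matrix of
bordered minors is `det B • S`, with determinant `det B ^ (t-s+1) * det S`, while
`δ_t = det B * det S`. Both sides are integer polynomials in the entries of `A`, so it suffices
to check the identity for the generic matrix over `ℤ[x_ij]`, whose block `B` becomes invertible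
over the fraction field. -/

namespace Matrix

theorem mvPolynomialX_map_eval₂Hom {m n R : Type*} [CommRing R] (N : Matrix m n R) :
    (mvPolynomialX m n ℤ).map (MvPolynomial.eval₂Hom (Int.castRingHom R) fun p => N p.1 p.2) = N :=
  mvPolynomialX_map_eval₂ _ N

variable {m o R S : Type*} [Fintype m] [DecidableEq m] [CommRing R] [CommRing S]

def borderedMinors (M : Matrix (m ⊕ o) (m ⊕ o) R) : Matrix o o R :=
  of fun i j => (M.submatrix (Sum.map id fun _ : Unit => i) (Sum.map id fun _ : Unit => j)).det

theorem borderedMinors_eq_smul_schur (M : Matrix (m ⊕ o) (m ⊕ o) R)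
    [Invertible M.toBlocks₁₁] :
    borderedMinors M = M.toBlocks₁₁.det •
      (M.toBlocks₂₂ - M.toBlocks₂₁ * ⅟M.toBlocks₁₁ * M.toBlocks₁₂) := by
  ext i j
  rw [borderedMinors, of_apply, ← fromBlocks_toBlocks (M.submatrix _ _), smul_apply,
    smul_eq_mul]
  exact (det_fromBlocks₁₁ M.toBlocks₁₁ _ _ _).trans (by rw [det_unique (n := Unit)]; rfl)

theorem map_det_toBlocks₁₁ (f : R →+* S) (M : Matrix (m ⊕ o) (m ⊕ o) R) :
    f M.toBlocks₁₁.det = (M.map f).toBlocks₁₁.det :=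
  f.map_det _

variable [Fintype o] [DecidableEq o]

theorem map_det_borderedMinors (f : R →+* S) (M : Matrix (m ⊕ o) (m ⊕ o) R) :
    f (borderedMinors M).det = (borderedMinors (M.map f)).det := by
  rw [f.map_det]
  congr 1
  ext i j
  exact f.map_det _

variable [Nonempty o]

theorem det_borderedMinors_of_invertible (M : Matrix (m ⊕ o) (m ⊕ o) R)
    [Invertible M.toBlocks₁₁] :
    (borderedMinors M).det = M.toBlocks₁₁.det ^ (Fintype.card o - 1) * M.det := by
  have hM : M.det = M.toBlocks₁₁.det *
      (M.toBlocks₂₂ - M.toBlocks₂₁ * ⅟M.toBlocks₁₁ * M.toBlocks₁₂).det := by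
    conv_lhs => rw [← fromBlocks_toBlocks M]
    exact det_fromBlocks₁₁ ..
  rw [borderedMinors_eq_smul_schur, det_smul, hM, ← mul_assoc, ← pow_succ,
    Nat.sub_add_cancel Fintype.card_pos]

theorem det_borderedMinors (M : Matrix (m ⊕ o) (m ⊕ o) R) :
    (borderedMinors M).det = M.toBlocks₁₁.det ^ (Fintype.card o - 1) * M.det := by
  let P := MvPolynomial ((m ⊕ o) × (m ⊕ o)) ℤ
  let X := mvPolynomialX (m ⊕ o) (m ⊕ o) ℤ
  let ι := algebraMap P (FractionRing P)
  have hX : X.toBlocks₁₁.det ≠ 0 := by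
    intro h
    have := congrArg (MvPolynomial.eval₂Hom (Int.castRingHom ℤ)
      fun p => (1 : Matrix (m ⊕ o) (m ⊕ o) ℤ) p.1 p.2) h
    rw [map_det_toBlocks₁₁, mvPolynomialX_map_eval₂Hom, map_zero, ← fromBlocks_one,
      toBlocks_fromBlocks₁₁, det_one] at this
    exact one_ne_zero this
  have : Invertible (X.map ι).toBlocks₁₁ := by
    refine invertibleOfIsUnitDet _ (isUnit_iff_ne_zero.mpr ?_)
    rw [← map_det_toBlocks₁₁]
    exact (map_ne_zero_iff _ (IsFractionRing.injective P _)).mpr hX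
  have generic : (borderedMinors X).det = X.toBlocks₁₁.det ^ (Fintype.card o - 1) * X.det := by
    apply IsFractionRing.injective P (FractionRing P)
    rw [map_mul, map_pow, map_det_borderedMinors, map_det_toBlocks₁₁, ι.map_det]
    exact det_borderedMinors_of_invertible (X.map ι)
  have := congrArg (MvPolynomial.eval₂Hom (Int.castRingHom R) fun p => M p.1 p.2) generic
  rwa [map_mul, map_pow, map_det_borderedMinors, map_det_toBlocks₁₁, RingHom.map_det,
    RingHom.mapMatrix_apply, mvPolynomialX_map_eval₂Hom] at this

end Matrix

section

variable {R : Type*} [CommRing R] {n : ℕ} (A : Matrix (Fin n) (Fin n) R)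

theorem borderedMinor_eq_det_submatrix {k : ℕ} (hk : 1 ≤ k) (hkn : k - 1 ≤ n) (i j : Fin n) :
    borderedMinor A k i j = (A.submatrix (Sum.elim (Fin.castLE hkn) fun _ : Unit => i)
      (Sum.elim (Fin.castLE hkn) fun _ : Unit => j)).det := by
  let e : Fin (k - 1) ⊕ Unit ≃ Fin k := (Equiv.sumCongr (Equiv.refl _) finOneEquiv.symm).trans
    (finSumFinEquiv.trans (finCongr (by omega)))
  have index : ∀ (x : Fin n) (p : Fin (k - 1) ⊕ Unit),
      (if ((e p : Fin k) : ℕ) < k - 1 then ⟨(e p : ℕ) % n, Nat.mod_lt _ x.pos⟩ else x)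
        = Sum.elim (Fin.castLE hkn) (fun _ => x) p := by
    rintro x (p | _)
    · simp only [e, Equiv.trans_apply, Equiv.sumCongr_apply, Equiv.coe_refl, Sum.map_inl, id_eq,
        finSumFinEquiv_apply_left, finCongr_apply, Fin.val_cast, Fin.val_castAdd, Fin.is_lt,
        if_true, Nat.mod_eq_of_lt (p.isLt.trans_le hkn), Sum.elim_inl]
      rfl
    · simp [e]
  rw [borderedMinor, ← det_submatrix_equiv_self e]
  congr 1
  ext p q
  simp only [submatrix_apply, of_apply, index]

theorem cornerMinor_eq_det_submatrix {a c t : ℕ} (hact : a + c = t) (ht : t ≤ n) :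
    cornerMinor A t ht = (A.submatrix
      (Sum.elim (Fin.castLE (by omega : a ≤ n)) fun i : Fin c => ⟨a + i, by omega⟩)
      (Sum.elim (Fin.castLE (by omega : a ≤ n)) fun i : Fin c => ⟨a + i, by omega⟩)).det := by
  rw [cornerMinor, ← det_submatrix_equiv_self (finSumFinEquiv.trans (finCongr hact)),
    submatrix_submatrix]
  congr 2 <;> funext p <;> rcases p with p | p <;> ext <;> simp

end

/-- determinant Sylvester identity:
`det (a^s_{i,j})_{i,j=s..t} = δ_{s-1}^{t-s} * δ_t` for `1 ≤ s < t ≤ n`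
(indices written `1`-based as in the paper; below they are `0`-based, so the
rows and columns of `A^{(s)}_t` are `s-1, …, t-1`). -/
theorem sylvester_identity {R : Type*} [CommRing R] {n s t : ℕ}
    (A : Matrix (Fin n) (Fin n) R) (hs : 1 ≤ s) (hst : s < t) (ht : t ≤ n) :
    (Matrix.of fun i j : Fin (t - s + 1) =>
        borderedMinor A s ⟨s - 1 + i, by have := i.isLt; omega⟩
          ⟨s - 1 + j, by have := j.isLt; omega⟩).det
      = cornerMinor A (s - 1) (by omega) ^ (t - s) * cornerMinor A t ht := by
  let f : Fin (s - 1) ⊕ Fin (t - s + 1) → Fin n :=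
    Sum.elim (Fin.castLE (by omega)) fun i => ⟨s - 1 + i, by omega⟩
  have bordered_eq : (Matrix.of fun i j : Fin (t - s + 1) =>
      borderedMinor A s ⟨s - 1 + i, by omega⟩ ⟨s - 1 + j, by omega⟩)
        = borderedMinors (A.submatrix f f) := by
    ext i j
    rw [of_apply, borderedMinor_eq_det_submatrix A hs (by omega), borderedMinors, of_apply,
      submatrix_submatrix]
    congr 2 <;> funext p <;> rcases p with p | p <;> rfl
  rw [bordered_eq, det_borderedMinors, Fintype.card_fin, Nat.add_sub_cancel,
    cornerMinor_eq_det_submatrix A (by omega : s - 1 + (t - s + 1) = t) ht]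
  rfl
end

section
/- Let R be a commutative ring, A ∈ R^{n×n}, and s < t < n. For s+1 ≤ i ≤ t and t < j ≤ n, δ_s^{t-s-1} · δ_{t(i,j)} = Σ_{l=s+1}^{t} a^{(s+1)*}_{l,i} · a^{s+1}_{l,j}, where δ_{t(i,j)} is the determinant of the matrix obtained from the upper-left t×t block of A by replacing column i with column j of A, and a^{(s+1)*}_{l,i} is the cofactor of entry (l,i) in the matrix A^{(s+1)}_t of bordered (s+1)-minors. -/
open Matrix

/-- `δ_{t(i,j)}`: determinant of the upper-left `t × t` block of `A` with its
column `i` replaced by (the first `t` entries of) column `j` of `A`. -/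
def replacedColMinor {R : Type*} [CommRing R] {n : ℕ} (A : Matrix (Fin n) (Fin n) R)
    (t : ℕ) (ht : t ≤ n) (i : Fin t) (j : Fin n) : R :=
  (Matrix.of fun p q : Fin t =>
    if q = i then A (Fin.castLE ht p) j else A (Fin.castLE ht p) (Fin.castLE ht q)).det

/-- The matrix of "bordered minors" of the block matrix `fromBlocks A B C D`. -/
def bmBlock {R : Type*} [CommRing R] {s m : ℕ} (A : Matrix (Fin s) (Fin s) R)
    (B : Matrix (Fin s) (Fin m) R) (C : Matrix (Fin m) (Fin s) R)
    (D : Matrix (Fin m) (Fin m) R) : Matrix (Fin m) (Fin m) R :=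
  Matrix.of fun a b =>
    (Matrix.fromBlocks A (Matrix.of fun p (_ : Fin 1) => B p b)
      (Matrix.of fun (_ : Fin 1) q => C a q) (Matrix.of fun (_ _ : Fin 1) => D a b)).det

lemma bmBlock_map {R S : Type*} [CommRing R] [CommRing S] (f : R →+* S) {s m : ℕ}
    (A : Matrix (Fin s) (Fin s) R) (B : Matrix (Fin s) (Fin m) R)
    (C : Matrix (Fin m) (Fin s) R) (D : Matrix (Fin m) (Fin m) R) :
    (bmBlock A B C D).map f = bmBlock (A.map f) (B.map f) (C.map f) (D.map f) := by
  ext a b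
  simp only [bmBlock, Matrix.map_apply, Matrix.of_apply]
  rw [RingHom.map_det, RingHom.mapMatrix_apply, Matrix.fromBlocks_map]
  rfl

lemma sylvester_field {K : Type*} [Field K] {s m : ℕ} (hm : 0 < m)
    (A : Matrix (Fin s) (Fin s) K) (B : Matrix (Fin s) (Fin m) K)
    (C : Matrix (Fin m) (Fin s) K) (D : Matrix (Fin m) (Fin m) K) (hA : IsUnit A.det) :
    (bmBlock A B C D).det = A.det ^ (m - 1) * (fromBlocks A B C D).det := by
  have : Invertible A := A.invertibleOfIsUnitDet hA
  have hbm : bmBlock A B C D = A.det • (D - C * ⅟A * B) := by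
    ext a b
    simp only [bmBlock, Matrix.of_apply]
    rw [det_fromBlocks₁₁, det_fin_one]
    simp [Matrix.mul_apply, Matrix.sub_apply, Finset.mul_sum]
  rw [hbm, Matrix.det_smul, det_fromBlocks₁₁, Fintype.card_fin]
  have h : A.det ^ m = A.det ^ (m - 1) * A.det := by
    rw [← pow_succ]; congr 1; omega
  rw [h]; ring

lemma sylvester_blocks {R : Type*} [CommRing R] {s m : ℕ} (hm : 0 < m)
    (A : Matrix (Fin s) (Fin s) R) (B : Matrix (Fin s) (Fin m) R)
    (C : Matrix (Fin m) (Fin s) R) (D : Matrix (Fin m) (Fin m) R) :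
    (bmBlock A B C D).det = A.det ^ (m - 1) * (fromBlocks A B C D).det := by
  classical
  let ι := (Fin s ⊕ Fin m) × (Fin s ⊕ Fin m)
  let R0 := MvPolynomial ι ℤ
  let X : Matrix (Fin s ⊕ Fin m) (Fin s ⊕ Fin m) R0 := Matrix.of fun u v => MvPolynomial.X (u, v)
  -- the determinant of the generic corner block is nonzero
  have hXdet : (X.toBlocks₁₁).det ≠ 0 := by
    intro h
    have h2 := congrArg (MvPolynomial.eval (fun p : ι => if p.1 = p.2 then (1 : ℤ) else 0)) h
    rw [RingHom.map_det, RingHom.mapMatrix_apply, map_zero] at h2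
    have h3 : (X.toBlocks₁₁).map (MvPolynomial.eval fun p : ι => if p.1 = p.2 then (1 : ℤ) else 0)
        = (1 : Matrix (Fin s) (Fin s) ℤ) := by
      ext p q
      by_cases hpq : p = q <;>
        simp [X, Matrix.toBlocks₁₁, Matrix.one_apply, hpq]
    rw [h3, det_one] at h2
    exact one_ne_zero h2
  let K := FractionRing R0
  let ψ : R0 →+* K := algebraMap R0 K
  have hψ : Function.Injective ψ := IsFractionRing.injective R0 K
  have hK : IsUnit ((X.toBlocks₁₁.map ψ)).det := by
    rw [isUnit_iff_ne_zero]
    intro h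
    apply hXdet
    apply hψ
    rw [RingHom.map_det, RingHom.mapMatrix_apply, map_zero, h]
  have key := sylvester_field hm (X.toBlocks₁₁.map ψ) (X.toBlocks₁₂.map ψ)
    (X.toBlocks₂₁.map ψ) (X.toBlocks₂₂.map ψ) hK
  -- pull the identity back along the injective map ψ
  have gen : (bmBlock X.toBlocks₁₁ X.toBlocks₁₂ X.toBlocks₂₁ X.toBlocks₂₂).det
      = X.toBlocks₁₁.det ^ (m - 1)
        * (fromBlocks X.toBlocks₁₁ X.toBlocks₁₂ X.toBlocks₂₁ X.toBlocks₂₂).det := by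
    apply hψ
    simp only [_root_.map_mul, map_pow, RingHom.map_det, RingHom.mapMatrix_apply,
      bmBlock_map, Matrix.fromBlocks_map]
    exact key
  -- specialize the generic identity
  let φ : R0 →+* R := (MvPolynomial.eval₂Hom (Int.castRingHom R)
    (fun p : ι => fromBlocks A B C D p.1 p.2))
  have hmapX : ∀ u v, φ (X u v) = fromBlocks A B C D u v := by
    intro u v
    exact MvPolynomial.eval₂Hom_X' _ _ (u, v)
  have h11 : X.toBlocks₁₁.map φ = A := by
    ext p q; simp [Matrix.toBlocks₁₁, Matrix.map_apply, hmapX, Matrix.fromBlocks]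
  have h12 : X.toBlocks₁₂.map φ = B := by
    ext p q; simp [Matrix.toBlocks₁₂, Matrix.map_apply, hmapX, Matrix.fromBlocks]
  have h21 : X.toBlocks₂₁.map φ = C := by
    ext p q; simp [Matrix.toBlocks₂₁, Matrix.map_apply, hmapX, Matrix.fromBlocks]
  have h22 : X.toBlocks₂₂.map φ = D := by
    ext p q; simp [Matrix.toBlocks₂₂, Matrix.map_apply, hmapX, Matrix.fromBlocks]
  have final := congrArg φ gen
  simp only [_root_.map_mul, map_pow, RingHom.map_det, RingHom.mapMatrix_apply,
    bmBlock_map, Matrix.fromBlocks_map, h11, h12, h21, h22] at final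
  exact final

lemma borderedMinor_eq_fromBlocks {R : Type*} [CommRing R] {n s : ℕ} (hs : s < n)
    (A : Matrix (Fin n) (Fin n) R) (i0 j0 : Fin n) :
    borderedMinor A (s + 1) i0 j0 =
      (Matrix.fromBlocks (A.submatrix (Fin.castLE hs.le) (Fin.castLE hs.le))
        (Matrix.of fun p (_ : Fin 1) => A (Fin.castLE hs.le p) j0)
        (Matrix.of fun (_ : Fin 1) q => A i0 (Fin.castLE hs.le q))
        (Matrix.of fun (_ _ : Fin 1) => A i0 j0)).det := by
  rw [borderedMinor,
    ← Matrix.det_submatrix_equiv_self (finSumFinEquiv : Fin s ⊕ Fin 1 ≃ Fin (s + 1))]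
  congr 1
  ext u v
  cases u <;> cases v <;>
    · rename_i p q
      simp only [Matrix.submatrix_apply, Matrix.of_apply, finSumFinEquiv_apply_left,
        finSumFinEquiv_apply_right, Matrix.fromBlocks_apply₁₁, Matrix.fromBlocks_apply₁₂,
        Matrix.fromBlocks_apply₂₁, Matrix.fromBlocks_apply₂₂, Fin.coe_castAdd, Fin.coe_natAdd,
        Nat.add_sub_cancel, Fin.val_eq_zero]
      first
        | rw [if_neg (by omega), if_neg (by omega)]
        | rw [if_neg (by omega), if_pos q.is_lt]
        | rw [if_pos p.is_lt, if_neg (by omega)]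
        | rw [if_pos p.is_lt, if_pos q.is_lt]
      all_goals first
        | rfl
        | (congr <;>
            first
              | rfl
              | exact Nat.mod_eq_of_lt (by omega))

/-- for `s+1 ≤ i ≤ t < j ≤ n` (here `i : Fin (t-s)`, `j : Fin (n-t)`
with the obvious offsets), `δ_s^{t-s-1} δ_{t(i,j)} = Σ_l cof_{l,i}(A^{(s+1)}_t) · a^{s+1}_{l,j}`,
where the cofactor of entry `(l,i)` of `M` is `adjugate M i l`. -/
theorem replacedMinor_cofactor_expansion {R : Type*} [CommRing R] {n s t : ℕ}
    (A : Matrix (Fin n) (Fin n) R) (hst : s < t) (htn : t < n)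
    (i : Fin (t - s)) (j : Fin (n - t)) :
    cornerMinor A s (by omega) ^ (t - s - 1)
        * replacedColMinor A t (by omega) ⟨s + i, by have := i.isLt; omega⟩
            ⟨t + j, by have := j.isLt; omega⟩
      = ∑ l : Fin (t - s),
          (Matrix.of fun a b : Fin (t - s) => borderedMinor A (s + 1)
            ⟨s + a, by have := a.isLt; omega⟩ ⟨s + b, by have := b.isLt; omega⟩).adjugate i l
          * borderedMinor A (s + 1) ⟨s + l, by have := l.isLt; omega⟩
              ⟨t + j, by have := j.isLt; omega⟩ := by
  have hsn : s < n := by omega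
  have htn' : t ≤ n := by omega
  have hm0 : 0 < t - s := by omega
  have hj' : t + (j : ℕ) < n := by omega
  let m := t - s
  let j' : Fin n := ⟨t + j, hj'⟩
  let i' : Fin t := ⟨s + i, by omega⟩
  have hi'def : i' = ⟨s + i, by omega⟩ := rfl
  let A0 : Matrix (Fin s) (Fin s) R := A.submatrix (Fin.castLE hsn.le) (Fin.castLE hsn.le)
  have hA0 : A0 = A.submatrix (Fin.castLE hsn.le) (Fin.castLE hsn.le) := rfl
  let B0 : Matrix (Fin s) (Fin m) R := Matrix.of fun p b =>
    if b = i then A (Fin.castLE hsn.le p) j'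
    else A (Fin.castLE hsn.le p) ⟨s + b, by omega⟩
  have hB0 : B0 = Matrix.of fun (p : Fin s) (b : Fin m) =>
    if b = i then A (Fin.castLE hsn.le p) j'
    else A (Fin.castLE hsn.le p) ⟨s + b, by omega⟩ := rfl
  let C0 : Matrix (Fin m) (Fin s) R := Matrix.of fun a q =>
    A ⟨s + a, by omega⟩ (Fin.castLE hsn.le q)
  have hC0 : C0 = Matrix.of fun (a : Fin m) (q : Fin s) =>
    A ⟨s + a, by omega⟩ (Fin.castLE hsn.le q) := rfl
  let D0 : Matrix (Fin m) (Fin m) R := Matrix.of fun a b =>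
    if b = i then A ⟨s + a, by omega⟩ j'
    else A ⟨s + a, by omega⟩ ⟨s + b, by omega⟩
  have hD0 : D0 = Matrix.of fun (a : Fin m) (b : Fin m) =>
    if b = i then A ⟨s + a, by omega⟩ j'
    else A ⟨s + a, by omega⟩ ⟨s + b, by omega⟩ := rfl
  let N : Matrix (Fin m) (Fin m) R := Matrix.of fun a b =>
    borderedMinor A (s + 1) ⟨s + a, by omega⟩ ⟨s + b, by omega⟩
  let c : Fin m → R := fun l => borderedMinor A (s + 1) ⟨s + l, by omega⟩ j'
  let M0 : Matrix (Fin t) (Fin t) R := Matrix.of fun p q =>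
    if q = i' then A (Fin.castLE htn' p) j' else A (Fin.castLE htn' p) (Fin.castLE htn' q)
  have hM0 : M0 = Matrix.of fun (p q : Fin t) =>
    if q = i' then A (Fin.castLE htn' p) j'
    else A (Fin.castLE htn' p) (Fin.castLE htn' q) := rfl
  show A0.det ^ (m - 1) * M0.det = ∑ l, N.adjugate i l * c l
  -- Cramer's rule
  have h1 : (N.updateCol i c).det = ∑ l, N.adjugate i l * c l := by
    rw [← Matrix.cramer_apply, Matrix.cramer_eq_adjugate_mulVec]
    simp [Matrix.mulVec, dotProduct]
  -- identify updated column matrix with the bordered-minor block matrix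
  have h2 : N.updateCol i c = bmBlock A0 B0 C0 D0 := by
    ext a b
    by_cases hb : b = i
    · rw [Matrix.updateCol_apply, if_pos hb, hb]
      show borderedMinor A (s + 1) ⟨s + a, by omega⟩ j' = _
      rw [borderedMinor_eq_fromBlocks hsn A]
      simp only [bmBlock, Matrix.of_apply]
      congr 1
      ext u v
      cases u <;> cases v <;>
        simp [hA0, hB0, hC0, hD0, Matrix.fromBlocks]
    · rw [Matrix.updateCol_apply, if_neg hb]
      show borderedMinor A (s + 1) ⟨s + a, by omega⟩ ⟨s + b, by omega⟩ = _
      rw [borderedMinor_eq_fromBlocks hsn A]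
      simp only [bmBlock, Matrix.of_apply]
      congr 1
      ext u v
      cases u <;> cases v <;>
        simp [hA0, hB0, hC0, hD0, Matrix.fromBlocks, hb]
  -- identify the replaced-column block determinant
  have h4 : (Matrix.fromBlocks A0 B0 C0 D0).det = M0.det := by
    have hsm : s + m = t := by omega
    let e : Fin s ⊕ Fin m ≃ Fin t := finSumFinEquiv.trans (finCongr hsm)
    have he1 : ∀ p : Fin s, ((e (Sum.inl p) : Fin t) : ℕ) = p := fun p => by
      simp [e, finSumFinEquiv]
    have he2 : ∀ a : Fin m, ((e (Sum.inr a) : Fin t) : ℕ) = s + a := fun a => by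
      simp [e, finSumFinEquiv]
    have hi'val : (i' : Fin t).val = s + (i : ℕ) := rfl
    have hcast1 : ∀ p : Fin s, Fin.castLE htn' (e (Sum.inl p)) = Fin.castLE hsn.le p :=
      fun p => Fin.ext (by simp [he1])
    have hcast2 : ∀ a : Fin m,
        Fin.castLE htn' (e (Sum.inr a)) = (⟨s + (a : ℕ), by omega⟩ : Fin n) :=
      fun a => Fin.ext (by simp [he2])
    rw [← Matrix.det_submatrix_equiv_self e M0]
    congr 1
    ext u v
    simp only [Matrix.submatrix_apply, hM0, Matrix.of_apply]
    cases u <;> cases v <;> rename_i p q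
    · rw [if_neg (by rw [Fin.ext_iff, he1, hi'val]; omega), hcast1 p, hcast1 q]
      simp [hA0]
    · by_cases hb : q = i
      · rw [if_pos (by rw [Fin.ext_iff, he2, hi'val, hb]), hcast1 p]
        simp [hB0, hb]
      · have hcond : ¬ e (Sum.inr q) = i' := by
          rw [Fin.ext_iff, he2, hi'val]
          intro h
          exact hb (Fin.ext (by omega))
        rw [if_neg hcond, hcast1 p, hcast2 q]
        simp [hB0, hb]
    · rw [if_neg (by rw [Fin.ext_iff, he1, hi'val]; omega), hcast2 p, hcast1 q]
      simp [hC0]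
    · by_cases hb : q = i
      · rw [if_pos (by rw [Fin.ext_iff, he2, hi'val, hb]), hcast2 p]
        simp [hD0, hb]
      · have hcond : ¬ e (Sum.inr q) = i' := by
          rw [Fin.ext_iff, he2, hi'val]
          intro h
          exact hb (Fin.ext (by omega))
        rw [if_neg hcond, hcast2 p, hcast2 q]
        simp [hD0, hb]
  rw [← h1, h2, sylvester_blocks hm0 A0 B0 C0 D0, h4]
end

section
/- Let R be a commutative ring, A ∈ R^{n×n}, s < n, and let i, j > s. Then a^{s+1}_{i,j} = a_{i,j}·δ_s − Σ_{l=1}^{s} a_{l,j}·σ_{s(l,i)}, where σ_{s(l,i)} is the determinant of the matrix obtained from the upper-left s×s block of A by replacing its row l by the row (a_{i,1},…,a_{i,s}). -/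
open Matrix

/-- `σ_{s(l,i)}`: determinant of the upper-left `s × s` block of `A` with its
row `l` replaced by the row `(a_{i,1}, …, a_{i,s})`. -/
def replacedRowMinor {R : Type*} [CommRing R] {n : ℕ} (A : Matrix (Fin n) (Fin n) R)
    (s : ℕ) (hs : s ≤ n) (l : Fin s) (i : Fin n) : R :=
  (Matrix.of fun p q : Fin s =>
    if p = l then A i (Fin.castLE hs q) else A (Fin.castLE hs p) (Fin.castLE hs q)).det

def rowCycle {t : ℕ} (l : Fin (t + 1)) : Equiv.Perm (Fin (t + 1)) :=
  Fin.revPerm.trans ((Fin.cycleRange l.rev).trans Fin.revPerm)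

lemma sign_rowCycle {t : ℕ} (l : Fin (t + 1)) :
    Equiv.Perm.sign (rowCycle l) = (-1) ^ (l.rev : ℕ) := by
  have h : rowCycle l = Fin.revPerm * Fin.cycleRange l.rev * Fin.revPerm := rfl
  rw [h, _root_.map_mul, _root_.map_mul, Fin.sign_cycleRange]
  rcases Int.units_eq_one_or (Equiv.Perm.sign (Fin.revPerm : Equiv.Perm (Fin (t + 1)))) with h1 | h1 <;>
    rw [h1]
  · simp
  · rw [mul_comm, ← mul_assoc]
    simp

lemma rowCycle_apply_self {t : ℕ} (l : Fin (t + 1)) : rowCycle l l = Fin.last t := by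
  simp [rowCycle, Fin.cycleRange_self]

lemma rowCycle_apply_of_lt {t : ℕ} {l p : Fin (t + 1)} (h : p < l) : rowCycle l p = p := by
  have h1 : l.rev < p.rev := Fin.rev_lt_rev.mpr h
  simp [rowCycle, Fin.cycleRange_of_gt h1]

lemma rowCycle_apply_of_gt {t : ℕ} {l p : Fin (t + 1)} (h : l < p) :
    ((rowCycle l p : Fin (t + 1)) : ℕ) = (p : ℕ) - 1 := by
  have h1 : p.rev < l.rev := Fin.rev_lt_rev.mpr h
  have h2 := Fin.coe_cycleRange_of_lt h1
  simp only [rowCycle, Equiv.trans_apply, Fin.revPerm_apply]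
  have hl : (l : ℕ) < t + 1 := l.is_lt
  have hp : (p : ℕ) < t + 1 := p.is_lt
  have hpr : (p.rev : ℕ) = t + 1 - ((p : ℕ) + 1) := Fin.val_rev p
  have hlr : (l.rev : ℕ) = t + 1 - ((l : ℕ) + 1) := Fin.val_rev l
  rw [Fin.val_rev]
  omega

lemma succAbove_rowCycle {t : ℕ} (l p : Fin (t + 1)) :
    (Fin.castSucc l).succAbove (rowCycle l p)
      = if p = l then Fin.last (t + 1) else Fin.castSucc p := by
  rcases lt_trichotomy p l with h | h | h
  · rw [if_neg h.ne, rowCycle_apply_of_lt h, Fin.succAbove_of_castSucc_lt]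
    exact Fin.castSucc_lt_castSucc_iff.mpr h
  · subst h
    rw [if_pos rfl, rowCycle_apply_self, Fin.succAbove_of_le_castSucc, Fin.succ_last]
    exact Fin.castSucc_le_castSucc_iff.mpr (Fin.le_last p)
  · have hv := rowCycle_apply_of_gt h
    rw [if_neg h.ne']
    rw [Fin.succAbove_of_le_castSucc]
    · apply Fin.ext
      rw [Fin.val_succ, hv, Fin.coe_castSucc]
      have : 0 < (p : ℕ) := lt_of_le_of_lt (Nat.zero_le _) h
      omega
    · rw [Fin.le_def, Fin.coe_castSucc, Fin.coe_castSucc, hv]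
      omega

/-- `a^{s+1}_{i,j} = a_{i,j} δ_s − Σ_{l=1}^{s} a_{l,j} σ_{s(l,i)}`
for `i, j > s` (0-based: `s ≤ i, j`). -/
theorem borderedMinor_expansion {R : Type*} [CommRing R] {n s : ℕ}
    (A : Matrix (Fin n) (Fin n) R) (hs : s < n) (i j : Fin n)
    (hi : s ≤ (i : ℕ)) (hj : s ≤ (j : ℕ)) :
    borderedMinor A (s + 1) i j
      = A i j * cornerMinor A s hs.le
        - ∑ l : Fin s, A (Fin.castLE hs.le l) j * replacedRowMinor A s hs.le l i := by
  classical
  set r : Fin (s + 1) → Fin n := fun p => if h : (p : ℕ) < s then Fin.castLE hs.le ⟨p, h⟩ else i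
    with hr
  set c : Fin (s + 1) → Fin n := fun q => if h : (q : ℕ) < s then Fin.castLE hs.le ⟨q, h⟩ else j
    with hc
  set M : Matrix (Fin (s + 1)) (Fin (s + 1)) R := Matrix.of fun p q => A (r p) (c q) with hM
  have hB : borderedMinor A (s + 1) i j = M.det := by
    unfold borderedMinor
    congr 1
    ext p q
    simp only [Matrix.of_apply, Nat.add_sub_cancel, hM, hr, hc]
    congr 1
    · by_cases h : (p : ℕ) < s
      · rw [if_pos h, dif_pos h]
        exact Fin.ext (Nat.mod_eq_of_lt (h.trans hs))
      · rw [if_neg h, dif_neg h]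
    · by_cases h : (q : ℕ) < s
      · rw [if_pos h, dif_pos h]
        exact Fin.ext (Nat.mod_eq_of_lt (h.trans hs))
      · rw [if_neg h, dif_neg h]
  have hlast : (-1 : R) ^ ((Fin.last s : ℕ) + (Fin.last s : ℕ)) * M (Fin.last s) (Fin.last s)
      * (M.submatrix (Fin.last s).succAbove (Fin.last s).succAbove).det
      = A i j * cornerMinor A s hs.le := by
    have h1 : (-1 : R) ^ ((Fin.last s : ℕ) + (Fin.last s : ℕ)) = 1 :=
      Even.neg_one_pow ⟨(Fin.last s : ℕ), rfl⟩
    have h2 : M (Fin.last s) (Fin.last s) = A i j := by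
      simp only [hM, Matrix.of_apply, hr, hc, Fin.val_last, dif_neg (lt_irrefl s)]
    have h3 : (M.submatrix (Fin.last s).succAbove (Fin.last s).succAbove).det
        = cornerMinor A s hs.le := by
      unfold cornerMinor
      congr 1
      ext p q
      simp only [submatrix_apply, Fin.succAbove_last, hM, Matrix.of_apply, hr, hc,
        Fin.coe_castSucc, dif_pos p.is_lt, dif_pos q.is_lt, Fin.eta]
    rw [h1, h2, h3, one_mul]
  have hterm : ∀ l : Fin s,
      (-1 : R) ^ ((Fin.castSucc l : ℕ) + (Fin.last s : ℕ)) * M (Fin.castSucc l) (Fin.last s)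
        * (M.submatrix (Fin.castSucc l).succAbove (Fin.last s).succAbove).det
      = -(A (Fin.castLE hs.le l) j * replacedRowMinor A s hs.le l i) := by
    intro l
    have hl := l.is_lt
    obtain ⟨t, rfl⟩ : ∃ t, s = t + 1 := ⟨s - 1, by omega⟩
    have he : M (Fin.castSucc l) (Fin.last (t + 1)) = A (Fin.castLE hs.le l) j := by
      simp only [hM, Matrix.of_apply, hr, hc, Fin.coe_castSucc, Fin.val_last,
        dif_pos l.is_lt, dif_neg (lt_irrefl (t + 1)), Fin.eta]
    have hmat : (Matrix.of fun p q : Fin (t + 1) =>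
          if p = l then A i (Fin.castLE hs.le q) else A (Fin.castLE hs.le p) (Fin.castLE hs.le q))
        = ((M.submatrix (Fin.castSucc l).succAbove (Fin.last (t + 1)).succAbove).submatrix
            (rowCycle l) id) := by
      ext p q
      simp only [submatrix_apply, id_eq, Matrix.of_apply]
      rw [Fin.succAbove_last, succAbove_rowCycle]
      by_cases hp : p = l
      · rw [if_pos hp, if_pos hp]
        simp only [hM, Matrix.of_apply, hr, hc, Fin.val_last, Fin.coe_castSucc,
          dif_neg (lt_irrefl (t + 1)), dif_pos q.is_lt, Fin.eta]
      · rw [if_neg hp, if_neg hp]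
        simp only [hM, Matrix.of_apply, hr, hc, Fin.coe_castSucc,
          dif_pos p.is_lt, dif_pos q.is_lt, Fin.eta]
    have hσ : replacedRowMinor A (t + 1) hs.le l i
        = (-1 : R) ^ (l.rev : ℕ)
          * (M.submatrix (Fin.castSucc l).succAbove (Fin.last (t + 1)).succAbove).det := by
      rw [replacedRowMinor, hmat, Matrix.det_permute, sign_rowCycle]
      simp
    have hd : (M.submatrix (Fin.castSucc l).succAbove (Fin.last (t + 1)).succAbove).det
        = (-1 : R) ^ (l.rev : ℕ) * replacedRowMinor A (t + 1) hs.le l i := by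
      rw [hσ, ← mul_assoc, ← pow_add, Even.neg_one_pow ⟨(l.rev : ℕ), rfl⟩, one_mul]
    have hrev : (l.rev : ℕ) = t + 1 - ((l : ℕ) + 1) := Fin.val_rev l
    have hsign : (-1 : R) ^ ((Fin.castSucc l : ℕ) + (Fin.last (t + 1) : ℕ))
        * (-1 : R) ^ (l.rev : ℕ) = -1 := by
      rw [← pow_add]
      exact Odd.neg_one_pow ⟨t, by simp only [Fin.coe_castSucc, Fin.val_last]; omega⟩
    rw [he, hd]
    linear_combination (A (Fin.castLE hs.le l) j * replacedRowMinor A (t + 1) hs.le l i) * hsign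
  rw [hB, Matrix.det_succ_column M (Fin.last s), Fin.sum_univ_castSucc]
  rw [Finset.sum_congr rfl fun l _ => hterm l, hlast, Finset.sum_neg_distrib]
  ring
end

section
/- Let Ax = c be a consistent nonhomogeneous linear system over a field K with A of rank r and m unknowns. If x₁,…,x_{m-r+1} are linearly independent solutions, then the full solution set equals { Σ_{i=1}^{m-r+1} u_i x_i : u_i ∈ K, Σ_{i=1}^{m-r+1} u_i = 1 }. -/
open Matrix

private lemma diff_li {K : Type*} [Field K] {m q : ℕ}
    (x : Fin (q + 1) → Fin m → K) (hli : LinearIndependent K x) :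
    LinearIndependent K (fun i : Fin q => x i.succ - x 0) := by
  rw [Fintype.linearIndependent_iff] at hli ⊢
  intro a ha
  have hg : ∀ j, (Fin.cons (-(∑ i, a i)) a : Fin (q + 1) → K) j = 0 := by
    apply hli
    rw [Fin.sum_univ_succ]
    simp only [Fin.cons_zero, Fin.cons_succ]
    have : ∑ i : Fin q, a i • (x i.succ - x 0) = 0 := ha
    simp only [smul_sub, Finset.sum_sub_distrib, ← Finset.sum_smul] at this
    linear_combination (norm := module) this
  intro i
  have := hg i.succ
  simpa using this

/-- over a field `K`, if `Ax = c` (with `c ≠ 0`, `rank A = r`,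
`m = r + q` unknowns) has `m − r + 1` linearly independent solutions `x₁, …, x_{m-r+1}`,
then the full solution set is exactly the set of affine combinations
`Σ u_i x_i` with `Σ u_i = 1`. -/
theorem solution_set_eq_affine_combinations {K : Type*} [Field K] {n r q : ℕ}
    (A : Matrix (Fin n) (Fin (r + q)) K) (hrank : A.rank = r)
    (c : Fin n → K) (hc : c ≠ 0)
    (x : Fin (q + 1) → Fin (r + q) → K)
    (hsol : ∀ i, A.mulVec (x i) = c)
    (hli : LinearIndependent K x) :
    {y : Fin (r + q) → K | A.mulVec y = c}
      = {y | ∃ u : Fin (q + 1) → K, (∑ i, u i) = 1 ∧ y = ∑ i, u i • x i} := by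
  ext y
  simp only [Set.mem_setOf_eq]
  constructor
  · intro hy
    -- kernel of A has dimension q
    set f := A.mulVecLin with hf
    have hker : Module.finrank K (LinearMap.ker f) = q := by
      have h1 := LinearMap.finrank_range_add_finrank_ker f
      have h2 : Module.finrank K (Fin (r + q) → K) = r + q := by simp
      have h3 : Module.finrank K (LinearMap.range f) = r := hrank
      omega
    -- differences lie in the kernel
    have hmem : ∀ i : Fin q, (x i.succ - x 0) ∈ LinearMap.ker f := by
      intro i
      simp only [LinearMap.mem_ker, hf, map_sub, mulVecLin_apply, hsol, sub_self]
    set v : Fin q → LinearMap.ker f := fun i => ⟨x i.succ - x 0, hmem i⟩ with hv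
    have hvli : LinearIndependent K v := by
      apply LinearIndependent.of_comp (LinearMap.ker f).subtype
      exact diff_li x hli
    have hspan : Submodule.span K (Set.range v) = ⊤ :=
      hvli.span_eq_top_of_card_eq_finrank' (by simp [hker])
    have hymem : y - x 0 ∈ LinearMap.ker f := by
      simp only [LinearMap.mem_ker, hf, map_sub, mulVecLin_apply, hy, hsol, sub_self]
    set z : LinearMap.ker f := ⟨y - x 0, hymem⟩ with hz
    have hzspan : z ∈ Submodule.span K (Set.range v) := hspan ▸ Submodule.mem_top
    obtain ⟨a, haz⟩ := (Submodule.mem_span_range_iff_exists_fun K).mp hzspan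
    have hzval : y - x 0 = ∑ i, a i • (x i.succ - x 0) := by
      have := congrArg (Subtype.val) haz
      simp only [hv, hz, AddSubmonoidClass.coe_finset_sum, SetLike.mk_smul_mk] at this
      exact this.symm
    refine ⟨Fin.cons (1 - ∑ i, a i) a, ?_, ?_⟩
    · rw [Fin.sum_cons]; ring
    · rw [Fin.sum_univ_succ]
      simp only [Fin.cons_zero, Fin.cons_succ]
      have h2 : ∑ i : Fin q, a i • (x i.succ - x 0)
          = ∑ i : Fin q, a i • x i.succ - (∑ i, a i) • x 0 := by
        simp [smul_sub, Finset.sum_sub_distrib, Finset.sum_smul]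
      rw [h2] at hzval
      linear_combination (norm := module) hzval
  · rintro ⟨u, hu, rfl⟩
    have : A.mulVec (∑ i, u i • x i) = ∑ i, u i • A.mulVec (x i) := by
      rw [← mulVecLin_apply, map_sum]
      simp [mulVecLin_apply, Matrix.mulVec_smul]
    rw [this]
    simp only [hsol, ← Finset.sum_smul, hu, one_smul]
end

section
/- Let R be a GCD domain (or a domain where LCMs of finite sets exist) with field of fractions K, and let Ax = c be a nonhomogeneous linear system over R with basis set of solutions x_i = x̄_i χ_i^{-1}, i = 1,…,h, where x̄_i ∈ R^m and χ_i = DEN(x_i) ∈ R. Then the set of all solutions in K^m equals { ⟨x̄,q⟩ / ⟨χ,q⟩ : q ∈ R^h, ⟨χ,q⟩ ≠ 0 }, where x̄ = (x̄₁,…,x̄_h), χ = (χ₁,…,χ_h), and ⟨·,·⟩ denotes the R-bilinear pairing Σ x̄_i q_i (resp. Σ χ_i q_i). -/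
open Matrix

/-- over a GCD domain `R` with fraction field `K`, if
`x_i = x̄_i χ_i⁻¹` (`i = 1, …, h = m−r+1`, `x̄_i ∈ R^m`, `χ_i = DEN(x_i)`) is a basis
set of solutions of the nonhomogeneous system `Ax = c`, then the set of all
solutions in `K^m` is `{ ⟨x̄,q⟩ / ⟨χ,q⟩ : q ∈ R^h, ⟨χ,q⟩ ≠ 0 }`. -/
theorem solutions_as_quotients {R : Type*} [CommRing R] [IsDomain R] [GCDMonoid R]
    {n r q : ℕ}
    (A : Matrix (Fin n) (Fin (r + q)) R) (c : Fin n → R) (hc : c ≠ 0)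
    (hrank : (A.map (algebraMap R (FractionRing R))).rank = r)
    (xbar : Fin (q + 1) → Fin (r + q) → R) (χ : Fin (q + 1) → R)
    (hχ : ∀ i, χ i ≠ 0)
    (x : Fin (q + 1) → Fin (r + q) → FractionRing R)
    (hx : ∀ i k, x i k = algebraMap R (FractionRing R) (xbar i k)
        / algebraMap R (FractionRing R) (χ i))
    -- `χ i` is the denominator `DEN (x i)`: it divides every common denominator of `x i`
    (hden : ∀ i (d : R), (∀ k, ∃ y : R, algebraMap R (FractionRing R) y
        = algebraMap R (FractionRing R) d * x i k) → χ i ∣ d)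
    (hsol : ∀ i, (A.map (algebraMap R (FractionRing R))).mulVec (x i)
        = algebraMap R (FractionRing R) ∘ c)
    (hli : LinearIndependent (FractionRing R) x) :
    {y : Fin (r + q) → FractionRing R |
        (A.map (algebraMap R (FractionRing R))).mulVec y
          = algebraMap R (FractionRing R) ∘ c}
      = {y | ∃ t : Fin (q + 1) → R, (∑ i, χ i * t i) ≠ 0 ∧
          y = fun k => algebraMap R (FractionRing R) (∑ i, xbar i k * t i)
            / algebraMap R (FractionRing R) (∑ i, χ i * t i)} := by
  classical
  set φ := algebraMap R ((FractionRing R)) with hφ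
  have hφinj : Function.Injective φ := IsFractionRing.injective R (FractionRing R)
  have hφ0 : ∀ a : R, a ≠ 0 → φ a ≠ 0 := fun a ha h =>
    ha (hφinj (h.trans (map_zero φ).symm))
  set A' := A.map φ with hA'
  have hxb : ∀ i k, φ (xbar i k) = φ (χ i) * x i k := by
    intro i k
    rw [hx i k, mul_div_cancel₀ _ (hφ0 _ (hχ i))]
  -- Lemma A: any affine combination of the `x i` is a solution
  have lemA : ∀ lam : Fin (q + 1) → (FractionRing R), (∑ i, lam i) = 1 →
      A'.mulVec (∑ i, lam i • x i) = φ ∘ c := by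
    intro lam hlam
    have h1 : A'.mulVec (∑ i, lam i • x i) = ∑ i, lam i • A'.mulVec (x i) := by
      simp only [← mulVecLin_apply, map_sum, _root_.map_smul]
    rw [h1]
    have h2 : ∀ i, A'.mulVec (x i) = φ ∘ c := hsol
    simp_rw [fun i => h2 i]
    rw [← Finset.sum_smul, hlam, one_smul]
  -- Lemma B: any solution is an affine combination of the `x i`
  have lemB : ∀ y : Fin (r + q) → (FractionRing R), A'.mulVec y = φ ∘ c →
      ∃ lam : Fin (q + 1) → (FractionRing R), (∑ i, lam i) = 1 ∧ y = ∑ i, lam i • x i := by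
    intro y hy
    set f := A'.mulVecLin with hf
    have hker : Module.finrank (FractionRing R) (LinearMap.ker f) = q := by
      have h1 := LinearMap.finrank_range_add_finrank_ker f
      rw [show Module.finrank (FractionRing R) (LinearMap.range f) = r from hrank,
        Module.finrank_pi, Fintype.card_fin] at h1
      omega
    set v : Fin q → (Fin (r + q) → (FractionRing R)) := fun i => x i.succ - x 0 with hv
    have hvker : ∀ i, v i ∈ LinearMap.ker f := by
      intro i
      simp only [LinearMap.mem_ker, hv, map_sub, hf, mulVecLin_apply, hsol, sub_self]
    have hvli : LinearIndependent (FractionRing R) v := by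
      rw [Fintype.linearIndependent_iff] at hli ⊢
      intro g hg
      have key : ∑ i : Fin (q + 1),
          (Fin.cases (-(∑ j, g j)) g i : (FractionRing R)) • x i = 0 := by
        rw [Fin.sum_univ_succ]
        simp only [Fin.cases_zero, Fin.cases_succ]
        have e1 : (-(∑ j : Fin q, g j)) • x 0 + ∑ j : Fin q, g j • x j.succ
            = ∑ j : Fin q, g j • v j := by
          simp only [hv, smul_sub, Finset.sum_sub_distrib, neg_smul, Finset.sum_smul]
          abel
        rw [e1, hg]
      intro i
      have h0 := hli _ key i.succ
      simpa using h0
    have hspan : Submodule.span (FractionRing R) (Set.range v) = LinearMap.ker f := by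
      apply Submodule.eq_of_le_of_finrank_le
      · rw [Submodule.span_le]
        rintro _ ⟨i, rfl⟩
        exact hvker i
      · rw [hker, finrank_span_eq_card hvli, Fintype.card_fin]
    have hz : y - x 0 ∈ LinearMap.ker f := by
      simp only [LinearMap.mem_ker, map_sub, hf, mulVecLin_apply, hy, hsol, sub_self]
    rw [← hspan, Submodule.mem_span_range_iff_exists_fun] at hz
    obtain ⟨μ, hμ⟩ := hz
    refine ⟨Fin.cases (1 - ∑ i, μ i) μ, ?_, ?_⟩
    · rw [Fin.sum_univ_succ]
      simp
    · rw [Fin.sum_univ_succ]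
      simp only [Fin.cases_zero, Fin.cases_succ]
      have e1 : ∑ i : Fin q, μ i • x i.succ
          = (∑ i, μ i • v i) + (∑ i, μ i) • x 0 := by
        simp only [hv, smul_sub, Finset.sum_sub_distrib, Finset.sum_smul]
        abel
      rw [e1, hμ, sub_smul, one_smul]
      abel
  ext y
  simp only [Set.mem_setOf_eq]
  constructor
  · intro hy
    obtain ⟨lam, hlam1, hlamy⟩ := lemB y hy
    obtain ⟨b, hb⟩ := IsLocalization.exist_integer_multiples
      (nonZeroDivisors R) Finset.univ lam
    choose a ha using fun i => hb i (Finset.mem_univ i)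
    have ha' : ∀ i, φ (a i) = φ (b : R) * lam i := by
      intro i
      rw [ha i, Algebra.smul_def]
    set P : R := ∏ i, χ i with hP
    have hP0 : P ≠ 0 := Finset.prod_ne_zero_iff.2 fun i _ => hχ i
    set t : Fin (q + 1) → R := fun i => a i * ∏ j ∈ Finset.univ.erase i, χ j with ht
    have hχt : ∀ i, χ i * t i = a i * P := by
      intro i
      rw [ht]
      rw [hP, ← Finset.mul_prod_erase Finset.univ χ (Finset.mem_univ i)]
      ring
    have hsuma : (∑ i, a i) = (b : R) := by
      apply hφinj
      rw [map_sum]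
      simp_rw [ha']
      rw [← Finset.mul_sum, hlam1, mul_one]
    have hD : (∑ i, χ i * t i) = (b : R) * P := by
      simp_rw [hχt]
      rw [← Finset.sum_mul, hsuma]
    have hb0 : (b : R) ≠ 0 := nonZeroDivisors.coe_ne_zero b
    refine ⟨t, ?_, ?_⟩
    · rw [hD]; exact mul_ne_zero hb0 hP0
    · funext k
      rw [hD]
      have hnum : φ (∑ i, xbar i k * t i) = φ ((b : R) * P) * y k := by
        rw [map_sum]
        have : ∀ i, φ (xbar i k * t i) = φ ((b : R) * P) * (lam i * x i k) := by
          intro i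
          rw [_root_.map_mul, hxb, ht]
          rw [show φ (a i * ∏ j ∈ Finset.univ.erase i, χ j)
              = φ (a i) * φ (∏ j ∈ Finset.univ.erase i, χ j) from _root_.map_mul _ _ _]
          rw [ha']
          have : φ (χ i) * φ (∏ j ∈ Finset.univ.erase i, χ j) = φ P := by
            rw [← _root_.map_mul, hP, ← Finset.mul_prod_erase Finset.univ χ (Finset.mem_univ i)]
          rw [_root_.map_mul]
          calc φ (χ i) * x i k * (φ (b : R) * lam i * φ (∏ j ∈ Finset.univ.erase i, χ j))
              = (φ (χ i) * φ (∏ j ∈ Finset.univ.erase i, χ j)) * (φ (b : R) * (lam i * x i k)) := by ring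
            _ = φ P * (φ (b : R) * (lam i * x i k)) := by rw [this]
            _ = φ (b : R) * φ P * (lam i * x i k) := by ring
        simp_rw [this]
        rw [← Finset.mul_sum]
        congr 1
        have hyk : y k = ∑ i, lam i * x i k := by
          rw [hlamy]
          simp [Finset.sum_apply]
        rw [hyk]
      rw [hnum, mul_comm, mul_div_assoc, div_self (hφ0 _ (mul_ne_zero hb0 hP0)), mul_one]
  · rintro ⟨t, hD0, rfl⟩
    set D : R := ∑ i, χ i * t i with hD
    set lam : Fin (q + 1) → (FractionRing R) := fun i => φ (χ i * t i) / φ D with hlam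
    have hlam1 : (∑ i, lam i) = 1 := by
      rw [hlam]
      rw [← Finset.sum_div, ← map_sum, ← hD, div_self (hφ0 _ hD0)]
    have hfun : (fun k => φ (∑ i, xbar i k * t i) / φ D) = ∑ i, lam i • x i := by
      funext k
      rw [map_sum]
      have : ∀ i, φ (xbar i k * t i) = φ (χ i * t i) * x i k := by
        intro i
        rw [_root_.map_mul, _root_.map_mul, hxb]
        ring
      simp_rw [this]
      rw [Finset.sum_div]
      simp only [Finset.sum_apply, Pi.smul_apply, smul_eq_mul, hlam]
      refine Finset.sum_congr rfl fun i _ => ?_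
      rw [div_mul_eq_mul_div]
    rw [hfun]
    exact lemA lam hlam1
end

section
/- Let R be a domain with LCMs and K its field of fractions, and Ax = c a consistent nonhomogeneous system over R. Then the set I_A = { DEN(x) : x ∈ K^m, Ax = c } ∪ {0} is an ideal of R (up to associates, i.e. I_A is closed under addition and multiplication by elements of R when denominators are identified up to units). -/
/-!
The solution set of `Ax = c` over `K` is an affine subspace. If `a` is a common denominator
of a solution `x` and `b` one of a solution `y`, then `a + b` is a common denominator of the
solution `(a x + b y) / (a + b)` on the line through `x` and `y`; multiples of a common
denominator are common denominators.
-/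

open Matrix IsLocalization

section

variable (R : Type*) {K ι : Type*} [CommRing R] [Field K] [Algebra R K]

def IsCommonDenom (d : R) (x : ι → K) : Prop :=
  ∀ k, IsInteger R (algebraMap R K d * x k)

variable {R}

theorem IsCommonDenom.mul_left {d : R} {x : ι → K} (h : IsCommonDenom R d x) (r : R) :
    IsCommonDenom R (r * d) x := fun k => by
  simpa only [map_mul, mul_assoc, Algebra.smul_def] using isInteger_smul (a := r) (h k)

theorem isCommonDenom_of_algebraMap_eq_zero {d : R} (hd : algebraMap R K d = 0) (x : ι → K) :
    IsCommonDenom R d x := fun k => by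
  simpa only [hd, zero_mul] using isInteger_zero

theorem exists_isCommonDenom_add {S : AffineSubspace K (ι → K)} {a b : R} {x y : ι → K}
    (hx : x ∈ S) (hy : y ∈ S) (ha : IsCommonDenom R a x) (hb : IsCommonDenom R b y) :
    ∃ z ∈ S, IsCommonDenom R (a + b) z := by
  by_cases hab : algebraMap R K (a + b) = 0
  · exact ⟨x, hx, isCommonDenom_of_algebraMap_eq_zero hab x⟩
  refine ⟨AffineMap.lineMap x y (algebraMap R K b / algebraMap R K (a + b)),
    AffineMap.lineMap_mem _ hx hy, fun k => ?_⟩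
  have hz : algebraMap R K (a + b) *
      AffineMap.lineMap x y (algebraMap R K b / algebraMap R K (a + b)) k =
      algebraMap R K a * x k + algebraMap R K b * y k := by
    rw [AffineMap.lineMap_apply_module']
    simp only [Pi.add_apply, Pi.smul_apply, Pi.sub_apply, smul_eq_mul]
    rw [map_add] at hab ⊢
    field_simp
    ring
  rw [hz]
  exact isInteger_add (ha k) (hb k)

variable (R) in
/-- Common denominators of `x` are exactly the multiples of `DEN(x)`, so up to associates this is
`I_A` when `S` is the solution set of `Ax = c`. -/
def denominatorIdeal (S : AffineSubspace K (ι → K)) : Ideal R where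
  carrier := {d | d = 0 ∨ ∃ x ∈ S, IsCommonDenom R d x}
  zero_mem' := Or.inl rfl
  add_mem' := by
    rintro a b (rfl | ⟨x, hx, ha⟩) (rfl | ⟨y, hy, hb⟩)
    · exact Or.inl (add_zero 0)
    · exact Or.inr ⟨y, hy, by rwa [zero_add]⟩
    · exact Or.inr ⟨x, hx, by rwa [add_zero]⟩
    · exact Or.inr (exists_isCommonDenom_add hx hy ha hb)
  smul_mem' := by
    rintro r d (rfl | ⟨x, hx, hd⟩)
    · exact Or.inl (smul_zero r)
    · exact Or.inr ⟨x, hx, hd.mul_left r⟩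

theorem mem_denominatorIdeal {S : AffineSubspace K (ι → K)} {d : R} :
    d ∈ denominatorIdeal R S ↔ d = 0 ∨ ∃ x ∈ S, IsCommonDenom R d x :=
  Iff.rfl

end

def Matrix.solutionSpace {K ι κ : Type*} [Field K] [Fintype ι] (A : Matrix κ ι K) (b : κ → K) :
    AffineSubspace K (ι → K) :=
  (affineSpan K {b}).comap A.mulVecLin.toAffineMap

theorem Matrix.mem_solutionSpace {K ι κ : Type*} [Field K] [Fintype ι] {A : Matrix κ ι K}
    {b : κ → K} {x : ι → K} : x ∈ A.solutionSpace b ↔ A *ᵥ x = b := by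
  rw [solutionSpace, AffineSubspace.mem_comap, AffineSubspace.mem_affineSpan_singleton]
  rfl

theorem denominators_form_ideal_general {R : Type*} [CommRing R] [IsDomain R]
    {n m : ℕ}
    (A : Matrix (Fin n) (Fin m) R) (c : Fin n → R) :
    ∃ I : Ideal R, (I : Set R) =
      {d : R | d = 0 ∨ ∃ x : Fin m → FractionRing R,
        (A.map (algebraMap R (FractionRing R))).mulVec x
            = algebraMap R (FractionRing R) ∘ c ∧
        ∀ k, ∃ y : R, algebraMap R (FractionRing R) y
            = algebraMap R (FractionRing R) d * x k} := by
  refine ⟨denominatorIdeal R ((A.map (algebraMap R (FractionRing R))).solutionSpace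
    (algebraMap R (FractionRing R) ∘ c)), ?_⟩
  ext d
  simp only [SetLike.mem_coe, mem_denominatorIdeal, mem_solutionSpace]
  rfl

/-- over a GCD domain `R` (a domain with finite LCMs) with fraction
field `K`, for a consistent nonhomogeneous system `Ax = c`, the set of denominators
of `K`-solutions together with `0` is an ideal of `R`.  (Identifying denominators up
to associates, this set is exactly `{d : d = 0 or d is a common denominator of some
solution}`, since the multiples of `DEN(x)` are precisely the common denominators
of `x`.) -/
theorem denominators_form_ideal {R : Type*} [CommRing R] [IsDomain R] [GCDMonoid R]
    {n m : ℕ}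
    (A : Matrix (Fin n) (Fin m) R) (c : Fin n → R) (hc : c ≠ 0)
    (hcons : ∃ x : Fin m → FractionRing R,
      (A.map (algebraMap R (FractionRing R))).mulVec x
        = algebraMap R (FractionRing R) ∘ c) :
    ∃ I : Ideal R, (I : Set R) =
      {d : R | d = 0 ∨ ∃ x : Fin m → FractionRing R,
        (A.map (algebraMap R (FractionRing R))).mulVec x
            = algebraMap R (FractionRing R) ∘ c ∧
        ∀ k, ∃ y : R, algebraMap R (FractionRing R) y
            = algebraMap R (FractionRing R) d * x k} :=
  denominators_form_ideal_general A c
end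

section
/- Let R be a domain with LCMs, K its fraction field, and Ax = c a consistent nonhomogeneous system over R. The system has a solution in R^m if and only if the ideal I_A of denominators of all K-solutions equals R. -/
open Matrix

lemma map_mulVec_comp {R S : Type*} [CommRing R] [CommRing S] (f : R →+* S)
    {n m : ℕ} (A : Matrix (Fin n) (Fin m) R) (y : Fin m → R) :
    (A.map f).mulVec (f ∘ y) = f ∘ A.mulVec y := by
  funext i
  simp [mulVec, dotProduct, map_sum]

/-- over a GCD domain `R` (a domain with finite LCMs) with fraction
field `K`, a consistent nonhomogeneous system `Ax = c` has a solution in `R^m` if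
and only if the ideal `I_A` of denominators of all `K`-solutions (together with `0`)
is all of `R`. -/
theorem diophantine_solvable_iff_denominator_ideal_top {R : Type*}
    [CommRing R] [IsDomain R] [GCDMonoid R] {n m : ℕ}
    (A : Matrix (Fin n) (Fin m) R) (c : Fin n → R) (hc : c ≠ 0)
    (hcons : ∃ x : Fin m → FractionRing R,
      (A.map (algebraMap R (FractionRing R))).mulVec x
        = algebraMap R (FractionRing R) ∘ c) :
    (∃ y : Fin m → R, A.mulVec y = c) ↔
      {d : R | d = 0 ∨ ∃ x : Fin m → FractionRing R,
        (A.map (algebraMap R (FractionRing R))).mulVec x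
            = algebraMap R (FractionRing R) ∘ c ∧
        ∀ k, ∃ y : R, algebraMap R (FractionRing R) y
            = algebraMap R (FractionRing R) d * x k} = Set.univ := by
  set f := algebraMap R (FractionRing R) with hf
  have hinj : Function.Injective f := IsFractionRing.injective R (FractionRing R)
  constructor
  · rintro ⟨y, hy⟩
    apply Set.eq_univ_of_forall
    intro d
    right
    refine ⟨f ∘ y, ?_, fun k => ⟨d * y k, by simp⟩⟩
    rw [map_mulVec_comp, hy]
  · intro hS
    have h1 : (1 : R) ∈ {d : R | d = 0 ∨ ∃ x : Fin m → FractionRing R,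
        (A.map f).mulVec x = f ∘ c ∧
        ∀ k, ∃ y : R, f y = f d * x k} := hS ▸ Set.mem_univ 1
    rcases h1 with h | ⟨x, hx, hden⟩
    · exact absurd h one_ne_zero
    · choose y hy using hden
      refine ⟨y, ?_⟩
      have : f ∘ y = x := by
        funext k
        simpa using hy k
      have := map_mulVec_comp f A y
      rw [‹f ∘ y = x›, hx] at this
      funext i
      exact hinj (congrFun this.symm i)
end

section
/- Let R be a domain with LCMs, and let x_i = x̄_i χ_i^{-1}, i = 1,…,h, be a basis set of solutions of the nonhomogeneous system Ax = c over R. If the ideal generated by the denominators χ₁,…,χ_h is the unit ideal, then there exists q ∈ R^h with ⟨χ,q⟩ = 1, and z = ⟨x̄,q⟩ = Σ q_i x̄_i ∈ R^m is a Diophantine solution of Ax = c. Moreover, if q_s ≠ 0, then x₁,…,x_{s-1}, z, x_{s+1},…,x_h is again a basis set of solutions. -/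
open Matrix

/-- let `x_i = x̄_i χ_i⁻¹`, `i = 1, …, h = m−r+1`, be a basis set of
solutions of the nonhomogeneous system `Ax = c` over a GCD domain `R`.  If the
denominators `χ_i` generate the unit ideal, then there is a nonzero `t ∈ R^h` with
`⟨χ,t⟩ = 1` such that `z = ⟨x̄,t⟩` is a Diophantine solution; moreover whenever
`t_s ≠ 0`, replacing `x_s` by `z` again yields a basis set of solutions. -/
theorem diophantine_solution_from_unit_ideal {R : Type*}
    [CommRing R] [IsDomain R] [GCDMonoid R] {n r q : ℕ}
    (A : Matrix (Fin n) (Fin (r + q)) R) (c : Fin n → R) (hc : c ≠ 0)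
    (hrank : (A.map (algebraMap R (FractionRing R))).rank = r)
    (xbar : Fin (q + 1) → Fin (r + q) → R) (χ : Fin (q + 1) → R)
    (hχ : ∀ i, χ i ≠ 0)
    (x : Fin (q + 1) → Fin (r + q) → FractionRing R)
    (hx : ∀ i k, x i k = algebraMap R (FractionRing R) (xbar i k)
        / algebraMap R (FractionRing R) (χ i))
    (hden : ∀ i (d : R), (∀ k, ∃ y : R, algebraMap R (FractionRing R) y
        = algebraMap R (FractionRing R) d * x i k) → χ i ∣ d)
    (hsol : ∀ i, (A.map (algebraMap R (FractionRing R))).mulVec (x i)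
        = algebraMap R (FractionRing R) ∘ c)
    (hli : LinearIndependent (FractionRing R) x)
    (hideal : Ideal.span (Set.range χ) = ⊤) :
    ∃ t : Fin (q + 1) → R, t ≠ 0 ∧ (∑ i, χ i * t i) = 1 ∧
      A.mulVec (fun k => ∑ i, t i * xbar i k) = c ∧
      ∀ s : Fin (q + 1), t s ≠ 0 →
        (∀ i, (A.map (algebraMap R (FractionRing R))).mulVec
            (Function.update x s
              (fun k => algebraMap R (FractionRing R) (∑ i, t i * xbar i k)) i)
          = algebraMap R (FractionRing R) ∘ c) ∧
        LinearIndependent (FractionRing R)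
          (Function.update x s
            (fun k => algebraMap R (FractionRing R) (∑ i, t i * xbar i k))) := by
  classical
  set f : R →+* FractionRing R := (algebraMap R (FractionRing R) : R →+* FractionRing R) with hf
  have finj : Function.Injective f := IsFractionRing.injective R (FractionRing R)
  -- get t from the unit ideal hypothesis
  have h1 : (1 : R) ∈ Ideal.span (Set.range χ) := by rw [hideal]; trivial
  obtain ⟨t, ht⟩ := (Submodule.mem_span_range_iff_exists_fun R).mp h1
  have ht' : (∑ i, χ i * t i) = 1 := by
    rw [← ht]; exact Finset.sum_congr rfl fun i _ => (mul_comm _ _)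
  have htne : t ≠ 0 := by
    rintro rfl
    simp at ht'
  -- denominators are nonzero in K
  have hfχ : ∀ i, f (χ i) ≠ 0 := fun i h => hχ i (finj (by simpa using h))
  -- numerator relation
  have hxb : ∀ i k, f (xbar i k) = f (χ i) * x i k := by
    intro i k
    rw [hx i k]
    rw [mul_comm, div_mul_cancel₀ _ (hfχ i)]
  -- coefficients in K
  set ci : Fin (q + 1) → FractionRing R := fun i => f (t i) * f (χ i) with hci
  have hcisum : ∑ i, ci i = 1 := by
    have : ∑ i, ci i = f (∑ i, χ i * t i) := by
      rw [_root_.map_sum]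
      exact Finset.sum_congr rfl fun i _ => by rw [_root_.map_mul, mul_comm]
    rw [this, ht', _root_.map_one]
  -- z in K is the ci-combination of the x i
  have hzK : ∀ k, f (∑ i, t i * xbar i k) = ∑ i, ci i * x i k := by
    intro k
    rw [_root_.map_sum]
    refine Finset.sum_congr rfl fun i _ => ?_
    rw [_root_.map_mul, hxb i k, hci]
    ring
  -- z solves the system over K
  have zsol : (A.map (f : R →+* FractionRing R)).mulVec
      (fun k => f (∑ i, t i * xbar i k)) = f ∘ c := by
    funext j
    have hrow : ∀ i, ∑ k, f (A j k) * x i k = f (c j) := by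
      intro i
      have := congrFun (hsol i) j
      simpa [Matrix.mulVec, dotProduct, Matrix.map_apply] using this
    simp only [Matrix.mulVec, dotProduct, Matrix.map_apply, Function.comp_apply]
    calc ∑ k, f (A j k) * f (∑ i, t i * xbar i k)
        = ∑ k, ∑ i, ci i * (f (A j k) * x i k) := by
          refine Finset.sum_congr rfl fun k _ => ?_
          rw [hzK k, Finset.mul_sum]
          exact Finset.sum_congr rfl fun i _ => by ring
      _ = ∑ i, ci i * ∑ k, f (A j k) * x i k := by
          rw [Finset.sum_comm]
          exact Finset.sum_congr rfl fun i _ => by rw [Finset.mul_sum]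
      _ = ∑ i, ci i * f (c j) := Finset.sum_congr rfl fun i _ => by rw [hrow i]
      _ = f (c j) := by rw [← Finset.sum_mul, hcisum, one_mul]
  -- z solves the system over R
  have zsolR : A.mulVec (fun k => ∑ i, t i * xbar i k) = c := by
    funext j
    apply finj
    rw [RingHom.map_mulVec]
    exact congrFun zsol j
  refine ⟨t, htne, ht', zsolR, ?_⟩
  intro s hts
  set zK : Fin (r + q) → FractionRing R := fun k => f (∑ i, t i * xbar i k) with hzKdef
  constructor
  · intro i
    by_cases his : i = s
    · subst his
      rw [Function.update_self]
      exact zsol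
    · rw [Function.update_of_ne his]
      exact hsol i
  · rw [Fintype.linearIndependent_iff] at hli ⊢
    intro g hg
    set G : Fin (q + 1) → FractionRing R :=
      fun j => if j = s then g s * ci s else g j + g s * ci j with hG
    have hGzero : ∀ j, G j = 0 := by
      apply hli
      funext k
      have hg' := congrFun hg k
      simp only [Finset.sum_apply, Pi.smul_apply, Pi.zero_apply, smul_eq_mul] at hg' ⊢
      rw [← hg']
      rw [← Finset.add_sum_erase _ _ (Finset.mem_univ s),
          ← Finset.add_sum_erase _ (fun j => g j * Function.update x s zK j k)
            (Finset.mem_univ s)]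
      have e1 : ∀ j ∈ Finset.univ.erase s,
          g j * Function.update x s zK j k = g j * x j k := by
        intro j hj
        rw [Function.update_of_ne (Finset.ne_of_mem_erase hj)]
      have e2 : ∀ j ∈ Finset.univ.erase s,
          G j * x j k = g j * x j k + g s * (ci j * x j k) := by
        intro j hj
        rw [hG]
        simp only [Finset.ne_of_mem_erase hj, if_false]
        ring
      rw [Finset.sum_congr rfl e1, Finset.sum_congr rfl e2,
          Finset.sum_add_distrib, ← Finset.mul_sum]
      have hGs : G s = g s * ci s := by rw [hG]; simp
      have hupd : Function.update x s zK s k = zK k := by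
        rw [Function.update_self]
      rw [hGs, hupd]
      have h2 : zK k = ∑ i, ci i * x i k := hzK k
      rw [h2, ← Finset.add_sum_erase _ (fun i => ci i * x i k) (Finset.mem_univ s)]
      ring
    have hcis : ci s ≠ 0 := by
      rw [hci]
      exact mul_ne_zero (fun h => hts (finj (by simpa using h))) (hfχ s)
    have hgs : g s = 0 := by
      have := hGzero s
      rw [hG] at this
      simp only [if_pos rfl] at this
      exact (mul_eq_zero.mp this).resolve_right hcis
    intro j
    by_cases hjs : j = s
    · rw [hjs]; exact hgs
    · have := hGzero j
      rw [hG] at this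
      simp only [hjs, if_false, hgs, zero_mul, add_zero] at this
      exact this
end

section
/- Let x_i = x̄_i χ_i^{-1}, i = 1,…,h, be a basis set of solutions of a nonhomogeneous linear system Ax = c over a domain R, and suppose χ₁ = 1 (so x₁ = x̄₁ ∈ R^m). Then the vectors x̄₁ and x̄_i − x̄₁(χ_i − 1), i = 2,…,h, all lie in R^m, are linearly independent over the fraction field, and each satisfies A z = c; that is, they form a Diophantine basis of solutions. -/
open Matrix

/-- let `x_i = x̄_i χ_i⁻¹`, `i = 1, …, h = m−r+1`, be a basis set of
solutions of the nonhomogeneous system `Ax = c` over a domain `R`, with `χ₁ = 1`.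
Then the vectors `x̄₁` and `x̄_i − x̄₁(χ_i − 1)` (`i = 2, …, h`) lie in `R^m`, are
linearly independent over the fraction field, and all solve `Az = c`; they form a
Diophantine basis of solutions.  (The uniform formula below gives `x̄₁` at `i = 1`
since `χ₁ = 1`.) -/
theorem diophantine_basis_from_unit_denominator {R : Type*}
    [CommRing R] [IsDomain R] {n r q : ℕ}
    (A : Matrix (Fin n) (Fin (r + q)) R) (c : Fin n → R) (hc : c ≠ 0)
    (xbar : Fin (q + 1) → Fin (r + q) → R) (χ : Fin (q + 1) → R)
    (hχ : ∀ i, χ i ≠ 0) (hχ0 : χ 0 = 1)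
    (x : Fin (q + 1) → Fin (r + q) → FractionRing R)
    (hx : ∀ i k, x i k = algebraMap R (FractionRing R) (xbar i k)
        / algebraMap R (FractionRing R) (χ i))
    (hsol : ∀ i, (A.map (algebraMap R (FractionRing R))).mulVec (x i)
        = algebraMap R (FractionRing R) ∘ c)
    (hli : LinearIndependent (FractionRing R) x) :
    (∀ i, A.mulVec (fun k => xbar i k - (χ i - 1) * xbar 0 k) = c) ∧
    LinearIndependent (FractionRing R)
      (fun i (k : Fin (r + q)) =>
        algebraMap R (FractionRing R) (xbar i k - (χ i - 1) * xbar 0 k)) := by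
  classical
  have hinj : Function.Injective (algebraMap R (FractionRing R)) :=
    IsFractionRing.injective R (FractionRing R)
  have hχ' : ∀ i, algebraMap R (FractionRing R) (χ i) ≠ 0 := fun i h =>
    hχ i (hinj (by simpa using h))
  have hxbar : ∀ i k, algebraMap R (FractionRing R) (xbar i k)
      = algebraMap R (FractionRing R) (χ i) * x i k := by
    intro i k
    rw [hx i k, mul_div_cancel₀ _ (hχ' i)]
  have key : ∀ i, (fun k => algebraMap R (FractionRing R) (xbar i k - (χ i - 1) * xbar 0 k))
      = algebraMap R (FractionRing R) (χ i) • x i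
        + (1 - algebraMap R (FractionRing R) (χ i)) • x 0 := by
    intro i
    funext k
    simp only [map_sub, _root_.map_mul, _root_.map_one, hxbar, hχ0, Pi.add_apply,
      Pi.smul_apply, smul_eq_mul]
    ring
  constructor
  · intro i
    funext j
    apply hinj
    rw [(algebraMap R (FractionRing R)).map_mulVec]
    rw [show ((algebraMap R (FractionRing R) : R →+* FractionRing R)
          ∘ fun k => xbar i k - (χ i - 1) * xbar 0 k)
        = algebraMap R (FractionRing R) (χ i) • x i
          + (1 - algebraMap R (FractionRing R) (χ i)) • x 0 from key i]
    rw [Matrix.mulVec_add, Matrix.mulVec_smul, Matrix.mulVec_smul, hsol i, hsol 0]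
    simp [Algebra.smul_def]
    ring
  · have heq : (fun i (k : Fin (r + q)) =>
          algebraMap R (FractionRing R) (xbar i k - (χ i - 1) * xbar 0 k))
        = fun i => algebraMap R (FractionRing R) (χ i) • x i
            + (1 - algebraMap R (FractionRing R) (χ i)) • x 0 := funext key
    rw [heq]
    rw [Fintype.linearIndependent_iff] at hli ⊢
    intro g hg
    set χ' : Fin (q + 1) → FractionRing R := fun i => algebraMap R (FractionRing R) (χ i)
      with hχ'def
    set S : FractionRing R := ∑ j, g j * (1 - χ' j) with hS
    have expand : ∑ i, g i • (χ' i • x i + (1 - χ' i) • x 0)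
        = ∑ i, (g i * χ' i) • x i + S • x 0 := by
      rw [hS, Finset.sum_smul, ← Finset.sum_add_distrib]
      exact Finset.sum_congr rfl fun i _ => by rw [smul_add, smul_smul, smul_smul]
    have iteq : ∑ i, (if i = 0 then S else 0) • x i = S • x 0 := by
      simp [ite_smul]
    have hsplit : ∑ i, (g i * χ' i + (if i = 0 then S else 0)) • x i
        = ∑ i, (g i * χ' i) • x i + ∑ i, (if i = 0 then S else 0) • x i := by
      rw [← Finset.sum_add_distrib]
      exact Finset.sum_congr rfl fun i _ => add_smul _ _ _
    have hg' : ∑ i, (g i * χ' i + (if i = 0 then S else 0)) • x i = 0 := by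
      rw [hsplit, iteq, ← expand]
      exact hg
    have hz := hli _ hg'
    have hne0 : ∀ i, i ≠ 0 → g i = 0 := by
      intro i hi
      have h := hz i
      rw [if_neg hi, add_zero] at h
      rcases mul_eq_zero.1 h with h | h
      · exact h
      · exact absurd h (hχ' i)
    have h0 := hz 0
    have hsum : S = g 0 * (1 - χ' 0) := by
      rw [hS, Finset.sum_eq_single 0]
      · intro j _ hj; rw [hne0 j hj, zero_mul]
      · simp
    have hχ'0 : χ' 0 = 1 := by rw [hχ'def]; simp [hχ0]
    rw [if_pos rfl, hsum, hχ'0, sub_self, mul_zero, add_zero] at h0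
    intro i
    by_cases hi : i = 0
    · subst hi
      simpa using h0
    · exact hne0 i hi
end

section
/- Let R be a commutative ring and A ∈ R^{n×n} with block decomposition [[A₀,C],[B,D]], A₀ of size s×s, δ_s = det A₀, δ_n = det A, and F = adj(A₀). If δ_s is a non-zero-divisor, then det(δ_s·D − B·F·C) = δ_s^{n-s-1}·δ_n. -/
/-! Left multiplication by the block lower-triangular matrix `[[1, 0], [-B adj A₀, δ 1]]`, of
determinant `δ^m`, clears the lower-left block of `[[A₀, C], [B, D]]` and leaves `δ D - B adj(A₀) C`
in its place. Comparing determinants gives `δ · det(δ D - B adj(A₀) C) = δ^m · det A`, and `δ` is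
cancelled since it is a non-zero-divisor. -/

namespace Matrix

variable {R : Type*} [CommRing R] {l n : Type*} [Fintype l] [DecidableEq l] [Fintype n]
  [DecidableEq n]

theorem fromBlocks_adjugate_elim_mul_fromBlocks (A : Matrix l l R) (C : Matrix l n R)
    (B : Matrix n l R) (D : Matrix n n R) :
    fromBlocks 1 0 (-(B * A.adjugate)) (A.det • 1) * fromBlocks A C B D
      = fromBlocks A C 0 (A.det • D - B * A.adjugate * C) := by
  rw [fromBlocks_multiply]
  simp only [Matrix.one_mul, Matrix.zero_mul, add_zero, Matrix.neg_mul, Matrix.mul_assoc,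
    adjugate_mul, Matrix.mul_smul, Matrix.mul_one, Matrix.smul_mul,
    neg_add_cancel, sub_eq_neg_add]

theorem det_mul_det_smul_sub_mul_adjugate_mul (A : Matrix l l R) (C : Matrix l n R)
    (B : Matrix n l R) (D : Matrix n n R) :
    A.det * (A.det • D - B * A.adjugate * C).det
      = A.det ^ Fintype.card n * (fromBlocks A C B D).det := by
  have h := congrArg det (fromBlocks_adjugate_elim_mul_fromBlocks A C B D)
  rwa [det_mul, det_fromBlocks_zero₁₂, det_fromBlocks_zero₂₁, det_one, det_smul, det_one,
    one_mul, mul_one, eq_comm] at h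

end Matrix

theorem det_schur_complement_scaled_general {R : Type*} [CommRing R] {s m : ℕ}
    (hm : 0 < m)
    (A₀ : Matrix (Fin s) (Fin s) R) (C : Matrix (Fin s) (Fin m) R)
    (B : Matrix (Fin m) (Fin s) R) (D : Matrix (Fin m) (Fin m) R)
    (hδ : A₀.det ∈ nonZeroDivisors R) :
    (A₀.det • D - B * A₀.adjugate * C).det
      = A₀.det ^ (m - 1) * (Matrix.fromBlocks A₀ C B D).det := by
  have h := Matrix.det_mul_det_smul_sub_mul_adjugate_mul A₀ C B D
  rw [Fintype.card_fin, ← mul_pow_sub_one hm.ne', mul_assoc] at h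
  exact (mul_cancel_left_mem_nonZeroDivisors hδ).mp h

/-- for a block matrix `A = [[A₀,C],[B,D]]` over a commutative ring,
with `A₀` of size `s × s` (`0 < s`, `0 < m = n − s`), `δ_s = det A₀` a
non-zero-divisor and `F = adj A₀`, one has
`det (δ_s • D − B F C) = δ_s^{n−s−1} · det A`. -/
theorem det_schur_complement_scaled {R : Type*} [CommRing R] {s m : ℕ}
    (hs : 0 < s) (hm : 0 < m)
    (A₀ : Matrix (Fin s) (Fin s) R) (C : Matrix (Fin s) (Fin m) R)
    (B : Matrix (Fin m) (Fin s) R) (D : Matrix (Fin m) (Fin m) R)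
    (hδ : A₀.det ∈ nonZeroDivisors R) :
    (A₀.det • D - B * A₀.adjugate * C).det
      = A₀.det ^ (m - 1) * (Matrix.fromBlocks A₀ C B D).det :=
  det_schur_complement_scaled_general hm A₀ C B D hδ
end
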